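/- arXiv:2410.17749 — 5 statements merged into one kernel-verified Lean document; each statement's English description precedes it below -/
import Mathlib

section
/- If p ∈ A_T and q ∈ A_T, then p/(p+q) ∈ A_T. That is, if p and q are root marginals of finite tree 2-SAT formulas, then so is p/(p+q) (realized by joining the two trees to a new root variable o through one clause in which o appears negated and the old root non-negated, and one clause in which o appears non-negated and the old root non-negated). -/
/-!
Join the two trees through a fresh root variable `r` with the clauses `¬r ∨ o₁` and `r ∨ o₂`.
Setting `r` true forces `o₁` and leaves the second tree free; setting it false forces `o₂` and
leaves the first tree free. Hence the joined formula has `Z₁⁺ Z₂` solutions with `r` true and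
`Z₁ Z₂⁺` with `r` false, where `Zᵢ` counts the solutions of the `i`-th tree and `Zᵢ⁺` those with
its root true; dividing through by `Z₁ Z₂` gives `p / (p + q)`. This needs `Z₁, Z₂ ≠ 0`: a tree
formula is satisfiable, since after rooting the factor graph every clause has a child variable,
and giving each variable the sign of its parent clause satisfies all clauses. The joined factor
graph is again a tree because it is connected and has one more variable than clauses.
-/

/-- A 2-SAT clause over variables `V`: two distinct variables `x ≠ y` together with
signs `sx, sy : Bool` (`true` encodes `+1`, `false` encodes `-1`). -/
structure Clause2 (V : Type) where
  x : V
  y : V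
  sx : Bool
  sy : Bool
  hxy : x ≠ y

variable {V : Type} [Fintype V] [DecidableEq V]

/-- Variable `v` occurs in clause `a`. -/
def occurs (v : V) (a : Clause2 V) : Prop := v = a.x ∨ v = a.y

instance (v : V) (a : Clause2 V) : Decidable (occurs v a) := by
  unfold occurs; infer_instance

/-- An assignment `σ : V → Bool` satisfies clause `a` if one of its two literals is satisfied. -/
def satClause (σ : V → Bool) (a : Clause2 V) : Prop := σ a.x = a.sx ∨ σ a.y = a.sy

instance (σ : V → Bool) (a : Clause2 V) : Decidable (satClause σ a) := by
  unfold satClause; infer_instance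

/-- The set `S(Φ)` of satisfying assignments of the formula `Φ`. -/
def sols (Φ : Finset (Clause2 V)) : Finset (V → Bool) :=
  Finset.univ.filter fun σ => ∀ a ∈ Φ, satClause σ a

/-- The marginal `μ_Φ(σ_v = b)`: the fraction of satisfying assignments with `σ v = b`. -/
noncomputable def marginal (Φ : Finset (Clause2 V)) (v : V) (b : Bool) : ℝ :=
  (((sols Φ).filter fun σ => σ v = b).card : ℝ) / ((sols Φ).card : ℝ)

/-- The factor graph `G(Φ)`: the bipartite graph on variables and clauses with an edge
`{v, a}` whenever `v` occurs in `a`. -/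
def factorGraph (Φ : Finset (Clause2 V)) : SimpleGraph (V ⊕ {a // a ∈ Φ}) :=
  SimpleGraph.fromRel fun u w =>
    match u, w with
    | Sum.inl v, Sum.inr a => occurs v a.val
    | _, _ => False

/-- `A_T`: the set of all root marginals `μ_T(σ_o = 1)` of finite rooted tree formulas. -/
noncomputable def treeMarginals : Set ℝ :=
  {r | ∃ (n : ℕ) (Φ : Finset (Clause2 (Fin n))) (o : Fin n),
        (factorGraph Φ).IsTree ∧ marginal Φ o true = r}

namespace Clause2

variable {α β : Type}

instance [DecidableEq α] : DecidableEq (Clause2 α) := fun a b =>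
  decidable_of_iff (a.x = b.x ∧ a.y = b.y ∧ a.sx = b.sx ∧ a.sy = b.sy) (by cases a; cases b; simp)

def map (f : α ↪ β) (a : Clause2 α) : Clause2 β :=
  ⟨f a.x, f a.y, a.sx, a.sy, f.injective.ne a.hxy⟩

lemma map_injective (f : α ↪ β) : Function.Injective (map f) := by
  rintro ⟨x, y, sx, sy, _⟩ ⟨x', y', sx', sy', _⟩ h
  simp_all [map]

@[simps]
def mapEmbedding (f : α ↪ β) : Clause2 α ↪ Clause2 β := ⟨map f, map_injective f⟩

/-- The sign of `v` in `a`; meaningful only when `occurs v a`. -/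
def sign [DecidableEq α] (a : Clause2 α) (v : α) : Bool := if v = a.x then a.sx else a.sy

end Clause2

section Clauses

variable {α β : Type}

@[simp]
lemma occurs_map (f : α ↪ β) (v : α) (a : Clause2 α) : occurs (f v) (a.map f) ↔ occurs v a := by
  simp [occurs, Clause2.map]

lemma satClause_map (f : α ↪ β) (σ : β → Bool) (a : Clause2 α) :
    satClause σ (a.map f) ↔ satClause (σ ∘ f) a := Iff.rfl

lemma satClause_of_eq_sign [DecidableEq α] {σ : α → Bool} {v : α} {a : Clause2 α}
    (hv : occurs v a) (h : σ v = a.sign v) : satClause σ a := by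
  rcases hv with rfl | rfl
  · exact .inl (by simpa [Clause2.sign] using h)
  · exact .inr (by simpa [Clause2.sign, a.hxy.symm] using h)

end Clauses

section FactorGraph

variable {α β : Type} {Φ : Finset (Clause2 α)}

@[simp]
lemma factorGraph_adj_inl_inr {v : α} {a : Φ} :
    (factorGraph Φ).Adj (.inl v) (.inr a) ↔ occurs v a := by
  simp [factorGraph]

@[simp]
lemma factorGraph_adj_inr_inl {v : α} {a : Φ} :
    (factorGraph Φ).Adj (.inr a) (.inl v) ↔ occurs v a := by
  simp [factorGraph]

@[simp]
lemma factorGraph_not_adj_inl_inl {v w : α} : ¬ (factorGraph Φ).Adj (.inl v) (.inl w) := by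
  simp [factorGraph]

@[simp]
lemma factorGraph_not_adj_inr_inr {a b : Φ} : ¬ (factorGraph Φ).Adj (.inr a) (.inr b) := by
  simp [factorGraph]

def factorGraphHom (f : α ↪ β) {Ψ : Finset (Clause2 β)}
    (h : Φ.map (Clause2.mapEmbedding f) ⊆ Ψ) : factorGraph Φ →g factorGraph Ψ where
  toFun := Sum.map f fun a => ⟨a.1.map f, h (Finset.mem_map_of_mem _ a.2)⟩
  map_rel' := by rintro (v | a) (w | b) hadj <;> simp_all

lemma card_edgeSet_factorGraph (Φ : Finset (Clause2 α)) :
    Nat.card (factorGraph Φ).edgeSet = 2 * Φ.card := by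
  let edge : Φ × Bool → (factorGraph Φ).edgeSet := fun ab =>
    ⟨s(.inl (if ab.2 then ab.1.1.x else ab.1.1.y), .inr ab.1), by cases ab.2 <;> simp [occurs]⟩
  have hedge : Function.Bijective edge := by
    constructor
    · rintro ⟨a, _ | _⟩ ⟨a', _ | _⟩ h <;> obtain ⟨h, rfl⟩ := by simpa [edge] using h
      exacts [rfl, (a.1.hxy h.symm).elim, (a.1.hxy h).elim, rfl]
    · rintro ⟨e, he⟩
      induction e using Sym2.ind with
      | h u w =>
        rcases u with v | a <;> rcases w with w | b <;> simp at he
        · rcases he with rfl | rfl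
          exacts [⟨(b, true), rfl⟩, ⟨(b, false), rfl⟩]
        · rcases he with rfl | rfl
          exacts [⟨(a, true), Subtype.ext Sym2.eq_swap⟩, ⟨(a, false), Subtype.ext Sym2.eq_swap⟩]
  rw [← Nat.card_congr (Equiv.ofBijective edge hedge)]
  simp [mul_comm]

lemma isTree_factorGraph_iff [Finite α] :
    (factorGraph Φ).IsTree ↔ (factorGraph Φ).Connected ∧ Φ.card + 1 ≤ Nat.card α := by
  rw [SimpleGraph.isTree_iff_connected_and_card]
  refine and_congr_right fun hc => ?_
  have hle := hc.card_vert_le_card_edgeSet_add_one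
  simp only [card_edgeSet_factorGraph, Nat.card_sum, Nat.card_eq_finsetCard] at hle ⊢
  omega

lemma isTree_factorGraph_map_equiv [Finite α] (e : α ≃ β)
    (ht : (factorGraph Φ).IsTree) :
    (factorGraph (Φ.map (Clause2.mapEmbedding e.toEmbedding))).IsTree := by
  have := Finite.of_equiv α e
  rw [isTree_factorGraph_iff] at ht ⊢
  refine ⟨ht.1.map (factorGraphHom e.toEmbedding subset_rfl) ?_, ?_⟩
  · rintro (w | ⟨b, hb⟩)
    · exact ⟨.inl (e.symm w), by simp [factorGraphHom]⟩
    · obtain ⟨a, ha, rfl⟩ := Finset.mem_map.1 hb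
      exact ⟨.inr ⟨a, ha⟩, rfl⟩
  · simpa [Nat.card_congr e] using ht.2

end FactorGraph

namespace SimpleGraph.IsTree

variable {W : Type} {G : SimpleGraph W}

lemma eq_of_adj_of_dist_lt (hG : G.IsTree) (r : W) {v u₁ u₂ : W} (h₁ : G.Adj u₁ v)
    (h₂ : G.Adj u₂ v) (d₁ : G.dist r u₁ < G.dist r v) (d₂ : G.dist r u₂ < G.dist r v) :
    u₁ = u₂ := by
  have shortest : ∀ {u}, G.Adj u v → G.dist r u < G.dist r v →
      ∃ p : G.Walk r v, p.IsPath ∧ p.penultimate = u := by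
    intro u h d
    obtain ⟨p, hp⟩ := hG.connected.exists_walk_length_eq_dist r u
    refine ⟨p.concat h, (p.concat h).isPath_of_length_eq_dist ?_, p.penultimate_concat h⟩
    rcases hG.dist_eq_dist_add_one_of_adj r h with h' | h' <;> simp <;> omega
  obtain ⟨p₁, hp₁, rfl⟩ := shortest h₁ d₁
  obtain ⟨p₂, hp₂, rfl⟩ := shortest h₂ d₂
  obtain rfl : p₁ = p₂ :=
    congrArg Subtype.val ((hG.isAcyclic.subsingleton_path r v).elim ⟨p₁, hp₁⟩ ⟨p₂, hp₂⟩)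
  rfl

lemma dist_lt_or_dist_lt_of_adj (hG : G.IsTree) (r : W) {v u₁ u₂ : W} (h₁ : G.Adj u₁ v)
    (h₂ : G.Adj u₂ v) (hne : u₁ ≠ u₂) : G.dist r v < G.dist r u₁ ∨ G.dist r v < G.dist r u₂ := by
  by_contra! h
  exact hne <| hG.eq_of_adj_of_dist_lt r h₁ h₂ (h.1.lt_of_ne (hG.dist_ne_of_adj r h₁))
    (h.2.lt_of_ne (hG.dist_ne_of_adj r h₂))

end SimpleGraph.IsTree

lemma mem_sols {Φ : Finset (Clause2 V)} {σ : V → Bool} :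
    σ ∈ sols Φ ↔ ∀ a ∈ Φ, satClause σ a := by
  simp [sols]

theorem sols_nonempty_of_isTree {Φ : Finset (Clause2 V)} (ht : (factorGraph Φ).IsTree) :
    (sols Φ).Nonempty := by
  classical
  obtain ⟨r⟩ := ht.connected.nonempty
  let G := factorGraph Φ
  let σ : V → Bool := fun v =>
    if h : ∃ a : Φ, occurs v a ∧ G.dist r (.inr a) < G.dist r (.inl v) then h.choose.1.sign v
    else true
  refine ⟨σ, mem_sols.2 fun c hc => ?_⟩
  obtain ⟨v, hv, hlt⟩ : ∃ v, occurs v c ∧ G.dist r (.inr ⟨c, hc⟩) < G.dist r (.inl v) := by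
    have hx : G.Adj (.inl c.x) (.inr ⟨c, hc⟩) := by simp [G, occurs]
    have hy : G.Adj (.inl c.y) (.inr ⟨c, hc⟩) := by simp [G, occurs]
    rcases ht.dist_lt_or_dist_lt_of_adj r hx hy (by simpa using c.hxy) with h | h
    exacts [⟨c.x, .inl rfl, h⟩, ⟨c.y, .inr rfl, h⟩]
  have hparent : ∃ a : Φ, occurs v a ∧ G.dist r (.inr a) < G.dist r (.inl v) := ⟨_, hv, hlt⟩
  have hchoose : hparent.choose = ⟨c, hc⟩ := Sum.inr_injective <|
    ht.eq_of_adj_of_dist_lt r (by simpa [G] using hparent.choose_spec.1) (by simpa [G] using hv)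
      hparent.choose_spec.2 hlt
  exact satClause_of_eq_sign hv (by simp only [σ, dif_pos hparent, hchoose])

section Renaming

variable {W : Type} [Fintype W] [DecidableEq W]

lemma mem_sols_map (f : V ↪ W) {Φ : Finset (Clause2 V)} {σ : W → Bool} :
    σ ∈ sols (Φ.map (Clause2.mapEmbedding f)) ↔ σ ∘ f ∈ sols Φ := by
  simp [mem_sols, satClause_map]

lemma sols_map_equiv (e : V ≃ W) (Φ : Finset (Clause2 V)) :
    sols (Φ.map (Clause2.mapEmbedding e.toEmbedding)) =
      (sols Φ).map (e.arrowCongr (.refl Bool)).toEmbedding := by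
  ext σ
  simp only [Finset.mem_map_equiv, mem_sols_map]
  rfl

lemma marginal_map_equiv (e : V ≃ W) (Φ : Finset (Clause2 V)) (v : V) (b : Bool) :
    marginal (Φ.map (Clause2.mapEmbedding e.toEmbedding)) (e v) b = marginal Φ v b := by
  simp [marginal, sols_map_equiv, Finset.filter_map, Function.comp_def]

end Renaming

lemma mem_treeMarginals {Φ : Finset (Clause2 V)} (ht : (factorGraph Φ).IsTree) (o : V) :
    marginal Φ o true ∈ treeMarginals :=
  let e := Fintype.equivFin V
  ⟨_, _, e o, isTree_factorGraph_map_equiv e ht, marginal_map_equiv e Φ o true⟩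

lemma div_div_div_add_div {K : Type} [Field K] (a b c d : K) (hb : b ≠ 0) (hd : d ≠ 0) :
    a / b / (a / b + c / d) = a * d / (a * d + b * c) := by
  rw [← mul_div_mul_right (a / b) _ (mul_ne_zero hb hd)]
  congr 1 <;> field_simp

section Join

open Finset Function

variable {V₁ V₂ : Type} [DecidableEq V₁] [DecidableEq V₂]

/-- The root `none` is joined to `o₁` by the clause `¬none ∨ o₁` and to `o₂` by `none ∨ o₂`,
so setting the root to `true` forces `o₁` and setting it to `false` forces `o₂`. -/
def joinFormula (Φ₁ : Finset (Clause2 V₁)) (Φ₂ : Finset (Clause2 V₂)) (o₁ : V₁) (o₂ : V₂) :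
    Finset (Clause2 (Option (V₁ ⊕ V₂))) :=
  insert ⟨none, some (.inl o₁), false, true, (Option.some_ne_none _).symm⟩ <|
    insert ⟨none, some (.inr o₂), true, true, (Option.some_ne_none _).symm⟩ <|
      Φ₁.map (Clause2.mapEmbedding (Embedding.inl.trans .some)) ∪
        Φ₂.map (Clause2.mapEmbedding (Embedding.inr.trans .some))

variable {Φ₁ : Finset (Clause2 V₁)} {Φ₂ : Finset (Clause2 V₂)} {o₁ : V₁} {o₂ : V₂}

lemma connected_factorGraph_joinFormula (hc₁ : (factorGraph Φ₁).Connected)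
    (hc₂ : (factorGraph Φ₂).Connected) : (factorGraph (joinFormula Φ₁ Φ₂ o₁ o₂)).Connected := by
  let G := factorGraph (joinFormula Φ₁ Φ₂ o₁ o₂)
  let hom₁ : factorGraph Φ₁ →g G := factorGraphHom (Embedding.inl.trans .some)
    (subset_union_left.trans <| (subset_insert _ _).trans (subset_insert _ _))
  let hom₂ : factorGraph Φ₂ →g G := factorGraphHom (Embedding.inr.trans .some)
    (subset_union_right.trans <| (subset_insert _ _).trans (subset_insert _ _))
  have root₁ : G.Reachable (.inl none) (.inl (some (.inl o₁))) :=
    have hc : G.Adj (.inl none) (.inr ⟨_, mem_insert_self _ _⟩) := by simp [G, occurs]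
    hc.reachable.trans (by simp [G, occurs] : G.Adj _ (.inl (some (.inl o₁)))).reachable
  have root₂ : G.Reachable (.inl none) (.inl (some (.inr o₂))) :=
    have hc : G.Adj (.inl none) (.inr ⟨_, mem_insert_of_mem (mem_insert_self _ _)⟩) := by
      simp [G, occurs]
    hc.reachable.trans (by simp [G, occurs] : G.Adj _ (.inl (some (.inr o₂)))).reachable
  have reach₁ (u) : G.Reachable (.inl none) (hom₁ u) :=
    root₁.trans ((hc₁.preconnected (.inl o₁) u).map hom₁)
  have reach₂ (u) : G.Reachable (.inl none) (hom₂ u) :=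
    root₂.trans ((hc₂.preconnected (.inl o₂) u).map hom₂)
  have reach (w) : G.Reachable (.inl none) w := by
    rcases w with (_ | v | v) | ⟨c, hc⟩
    · rfl
    · exact reach₁ (.inl v)
    · exact reach₂ (.inl v)
    · simp only [joinFormula, mem_insert, mem_union, mem_map, Clause2.mapEmbedding_apply] at hc
      rcases hc with rfl | rfl | ⟨a, ha, rfl⟩ | ⟨a, ha, rfl⟩
      · exact (by simp [G, occurs] : G.Adj (.inl none) _).reachable
      · exact (by simp [G, occurs] : G.Adj (.inl none) _).reachable
      · exact reach₁ (.inr ⟨a, ha⟩)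
      · exact reach₂ (.inr ⟨a, ha⟩)
  exact ⟨fun u w => (reach u).symm.trans (reach w)⟩

variable [Fintype V₁] [Fintype V₂]

lemma isTree_factorGraph_joinFormula (ht₁ : (factorGraph Φ₁).IsTree)
    (ht₂ : (factorGraph Φ₂).IsTree) : (factorGraph (joinFormula Φ₁ Φ₂ o₁ o₂)).IsTree := by
  rw [isTree_factorGraph_iff] at ht₁ ht₂ ⊢
  refine ⟨connected_factorGraph_joinFormula ht₁.1 ht₂.1, ?_⟩
  have hcard : #(joinFormula Φ₁ Φ₂ o₁ o₂) ≤ #Φ₁ + #Φ₂ + 2 := by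
    unfold joinFormula
    grw [card_insert_le, card_insert_le, card_union_le, card_map, card_map]
  simp only [Finite.card_option, Nat.card_sum]
  omega

lemma mem_sols_joinFormula {σ : Option (V₁ ⊕ V₂) → Bool} :
    σ ∈ sols (joinFormula Φ₁ Φ₂ o₁ o₂) ↔
      (σ none = true → σ (some (.inl o₁)) = true) ∧ (σ none = false → σ (some (.inr o₂)) = true) ∧
        (fun v => σ (some (.inl v))) ∈ sols Φ₁ ∧ (fun v => σ (some (.inr v))) ∈ sols Φ₂ := by
  simp only [mem_sols, joinFormula, forall_mem_insert, forall_mem_union, forall_mem_map,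
    Clause2.mapEmbedding_apply, satClause_map]
  refine and_congr ?_ (and_congr ?_ Iff.rfl) <;> unfold satClause <;> cases σ none <;> simp

lemma card_filter_sols_joinFormula (b : Bool) :
    #{σ ∈ sols (joinFormula Φ₁ Φ₂ o₁ o₂) | σ none = b} =
      #{σ₁ ∈ sols Φ₁ | b = true → σ₁ o₁ = true} * #{σ₂ ∈ sols Φ₂ | b = false → σ₂ o₂ = true} := by
  rw [← card_product]
  refine card_nbij' (fun σ => (fun v => σ (some (.inl v)), fun v => σ (some (.inr v))))
    (fun p o => o.elim b (Sum.elim p.1 p.2)) ?_ ?_ ?_ ?_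
  · intro σ hσ
    simp only [coe_filter, mem_sols_joinFormula, Set.mem_ofPred_eq] at hσ
    obtain ⟨⟨h₁, h₂, hs₁, hs₂⟩, rfl⟩ := hσ
    simp_all
  · rintro ⟨σ₁, σ₂⟩ hσ
    simp_all [mem_sols_joinFormula]
  · intro σ hσ
    funext o
    rcases o with _ | _ | _ <;> simp_all
  · intro p _
    rfl

lemma marginal_joinFormula (h₁ : (sols Φ₁).Nonempty) (h₂ : (sols Φ₂).Nonempty) :
    marginal (joinFormula Φ₁ Φ₂ o₁ o₂) none true =
      marginal Φ₁ o₁ true / (marginal Φ₁ o₁ true + marginal Φ₂ o₂ true) := by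
  rw [marginal, marginal, marginal, ← card_filter_add_card_filter_not
    (s := sols (joinFormula Φ₁ Φ₂ o₁ o₂)) (fun σ => σ none = true)]
  simp only [Bool.not_eq_true, card_filter_sols_joinFormula, true_implies, Bool.true_eq_false,
    Bool.false_eq_true, false_implies, filter_true]
  push_cast
  rw [div_div_div_add_div _ _ _ _ (by simpa using h₁.card_pos.ne') (by simpa using h₂.card_pos.ne')]

end Join

/-- **Closure of `A_T` under `(p, q) ↦ p/(p+q)`**: if `p` and `q` are root marginals of
finite tree formulas, then so is `p/(p+q)`. -/
theorem treeMarginals_ratio (p q : ℝ) (hp : p ∈ treeMarginals) (hq : q ∈ treeMarginals) :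
    p / (p + q) ∈ treeMarginals := by
  obtain ⟨n, Φ₁, o₁, ht₁, rfl⟩ := hp
  obtain ⟨m, Φ₂, o₂, ht₂, rfl⟩ := hq
  rw [← marginal_joinFormula (sols_nonempty_of_isTree ht₁) (sols_nonempty_of_isTree ht₂)]
  exact mem_treeMarginals (isTree_factorGraph_joinFormula ht₁ ht₂) none
end

section
/- Let S ⊆ (0,1) be a set of real numbers such that: (i) 1/2 ∈ S; (ii) if q ∈ S then 1 − q ∈ S; (iii) if q ∈ S then q/(1+q) ∈ S; (iv) if p ∈ S and q ∈ S then p/(p+q) ∈ S. Then S contains every rational number in (0,1), i.e. ℚ ∩ (0,1) ⊆ S. -/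
/-!
Write a rational in `(0,1)` as `a / (a + b)` with `a, b` positive integers and run the
subtractive Euclidean algorithm on `(a, b)`: `a = b` gives `1/2`; for `a < b`, `a / (a + b)` is
`q / (1 + q)` with `q = a / b = a / (a + (b - a))`, and symmetrically for `a > b` it is
`1 - q / (1 + q)` with `q = b / a`.
-/

theorem natCast_div_add_mem_of_closure {S : Set ℝ} (h_half : (1 / 2 : ℝ) ∈ S)
    (h_sub : ∀ q ∈ S, 1 - q ∈ S) (h_inc : ∀ q ∈ S, q / (1 + q) ∈ S)
    (a b : ℕ) (ha : 0 < a) (hb : 0 < b) : (a / (a + b) : ℝ) ∈ S := by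
  have ha' : (0 : ℝ) < a := by exact_mod_cast ha
  have hb' : (0 : ℝ) < b := by exact_mod_cast hb
  rcases lt_trichotomy a b with hab | rfl | hab
  · have hq := natCast_div_add_mem_of_closure h_half h_sub h_inc a (b - a) ha (by omega)
    rw [Nat.cast_sub hab.le, add_sub_cancel] at hq
    convert h_inc _ hq using 1
    field_simp
    ring
  · convert h_half using 1
    field_simp
    norm_num
  · have hq := natCast_div_add_mem_of_closure h_half h_sub h_inc b (a - b) hb (by omega)
    rw [Nat.cast_sub hab.le, add_sub_cancel] at hq
    convert h_sub _ (h_inc _ hq) using 1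
    field_simp
    ring
termination_by a + b

theorem Rat.exists_eq_natCast_div_add {x : ℚ} (hx₀ : 0 < x) (hx₁ : x < 1) :
    ∃ a b : ℕ, 0 < a ∧ 0 < b ∧ x = a / (a + b) := by
  have hnum : 0 < x.num := Rat.num_pos.mpr hx₀
  have hlt : x.num < x.den := Rat.num_lt_denom_iff.mpr hx₁
  refine ⟨x.num.toNat, x.den - x.num.toNat, by omega, by omega, ?_⟩
  have hden : (x.num.toNat + (x.den - x.num.toNat) : ℕ) = x.den := by omega
  rw [← Nat.cast_add, hden, ← Int.cast_natCast, Int.toNat_of_nonneg hnum.le]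
  exact (Rat.num_div_den x).symm

theorem rat_subset_of_closure_general (S : Set ℝ)
    (h_half : (1 / 2 : ℝ) ∈ S)
    (h_sub : ∀ q ∈ S, 1 - q ∈ S)
    (h_inc : ∀ q ∈ S, q / (1 + q) ∈ S) :
    ∀ x : ℚ, (x : ℝ) ∈ Set.Ioo (0 : ℝ) 1 → (x : ℝ) ∈ S := by
  rintro x ⟨hx₀, hx₁⟩
  obtain ⟨a, b, ha, hb, rfl⟩ :=
    Rat.exists_eq_natCast_div_add (by exact_mod_cast hx₀) (by exact_mod_cast hx₁)
  push_cast
  exact natCast_div_add_mem_of_closure h_half h_sub h_inc a b ha hb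

/-- **Generation of all rationals in (0,1).** If `S ⊆ (0,1)` contains `1/2`, is closed
under `q ↦ 1 - q`, `q ↦ q/(1+q)` and `(p,q) ↦ p/(p+q)`, then `ℚ ∩ (0,1) ⊆ S`. -/
theorem rat_subset_of_closure (S : Set ℝ) (hS : S ⊆ Set.Ioo (0 : ℝ) 1)
    (h_half : (1 / 2 : ℝ) ∈ S)
    (h_sub : ∀ q ∈ S, 1 - q ∈ S)
    (h_inc : ∀ q ∈ S, q / (1 + q) ∈ S)
    (h_ratio : ∀ p ∈ S, ∀ q ∈ S, p / (p + q) ∈ S) :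
    ∀ x : ℚ, (x : ℝ) ∈ Set.Ioo (0 : ℝ) 1 → (x : ℝ) ∈ S :=
  rat_subset_of_closure_general S h_half h_sub h_inc
end

section
/- Almost surely, θ_o = Σ_{i=1}^{d_∅} (−s_{(i)}) · log((1 + s'_{(i)} · tanh(θ_{(i)}/2))/2), where θ_{(i)} denotes the almost sure limit of θ_{(i)}^{(ℓ)} at the i-th child (i) of the root (which exists almost surely for every i). -/
/-!
Since `|s'| = 1` and `|tanh| < 1`, every argument of `log` in the recursion lies in `(0, 1)`,
so one step of the recursion is a continuous function of the values at the children. Off a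
null set the root and its countably many children all converge, and letting `ℓ → ∞` in
`θ^{(ℓ+1)} = F(θ^{(ℓ)}_{(0)}, θ^{(ℓ)}_{(1)}, …)` gives the identity by uniqueness of limits.
-/

open MeasureTheory ProbabilityTheory Filter

/-- The data of the branching-process recursion: jointly independent families, indexed by
the vertices `v : List ℕ` of the Ulam–Harris tree, of offspring numbers `deg v` (Poisson(d)),
and uniform signs `s v`, `s' v` (encoded as uniform values in `{0, 1} ⊆ ℕ`, where `1`
encodes the sign `+1` and `0` encodes the sign `-1`).  The three families are bundled as a
single jointly independent family `Z (v, i)`, `i : Fin 3`, with `deg v = Z (v, 0)`,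
`s v = Z (v, 1)` and `s' v = Z (v, 2)`. -/
structure GWSetup (Ω : Type*) [MeasurableSpace Ω] (P : Measure Ω) (d : ℝ) where
  Z : List ℕ × Fin 3 → Ω → ℕ
  meas : ∀ p, Measurable (Z p)
  indep : iIndepFun Z P
  poisson : ∀ (v : List ℕ) (k : ℕ),
    P {ω | Z (v, 0) ω = k} = ENNReal.ofReal (Real.exp (-d) * d ^ k / (Nat.factorial k : ℝ))
  unif_s : ∀ v : List ℕ,
    P {ω | Z (v, 1) ω = 0} = 1 / 2 ∧ P {ω | Z (v, 1) ω = 1} = 1 / 2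
  unif_s' : ∀ v : List ℕ,
    P {ω | Z (v, 2) ω = 0} = 1 / 2 ∧ P {ω | Z (v, 2) ω = 1} = 1 / 2

namespace GWSetup

variable {Ω : Type*} [MeasurableSpace Ω] {P : Measure Ω} {d : ℝ}

/-- The offspring number `d_v` of vertex `v`. -/
def deg (G : GWSetup Ω P d) (v : List ℕ) (ω : Ω) : ℕ := G.Z (v, 0) ω

/-- The sign `s_v ∈ {-1, +1}` of vertex `v`, as a real number. -/
noncomputable def sgn (G : GWSetup Ω P d) (v : List ℕ) (ω : Ω) : ℝ :=
  if G.Z (v, 1) ω = 1 then 1 else -1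

/-- The sign `s'_v ∈ {-1, +1}` of vertex `v`, as a real number. -/
noncomputable def sgn' (G : GWSetup Ω P d) (v : List ℕ) (ω : Ω) : ℝ :=
  if G.Z (v, 2) ω = 1 then 1 else -1

/-- The recursion `θ_v^{(0)} = 0`,
`θ_v^{(ℓ)} = -∑_{i=1}^{d_v} s_{v·i} log((1 + s'_{v·i} tanh(θ_{v·i}^{(ℓ-1)}/2))/2)`,
where the `i`-th child of `v` is `v ++ [i]`, `i ∈ {0, …, d_v - 1}`. -/
noncomputable def theta (G : GWSetup Ω P d) : ℕ → List ℕ → Ω → ℝ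
  | 0, _, _ => 0
  | ℓ + 1, v, ω =>
      -∑ i ∈ Finset.range (G.deg v ω),
        G.sgn (v ++ [i]) ω *
          Real.log ((1 + G.sgn' (v ++ [i]) ω * Real.tanh (theta G ℓ (v ++ [i]) ω / 2)) / 2)

/-- Membership of the Ulam–Harris vertex `v` in the Galton–Watson tree `T(ω)`: the smallest
set of vertices containing the root `[]` and, with every vertex `u`, all children
`u ++ [i]`, `i < deg u ω`. Concretely, every entry of `v` is below the offspring number of
the corresponding prefix. -/
def inTree (G : GWSetup Ω P d) (ω : Ω) (v : List ℕ) : Prop :=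
  ∀ j : Fin v.length, v.get j < G.deg (v.take (j : ℕ)) ω

/-- The event that the Galton–Watson tree is finite. -/
def finEvent (G : GWSetup Ω P d) : Set Ω := {ω | {v : List ℕ | G.inTree ω v}.Finite}

/-- The event that the Galton–Watson tree is infinite. -/
def infEvent (G : GWSetup Ω P d) : Set Ω := {ω | {v : List ℕ | G.inTree ω v}.Infinite}

end GWSetup

/-- `ψ(z) = (1 + tanh(z/2))/2`. -/
noncomputable def psi (z : ℝ) : ℝ := (1 + Real.tanh (z / 2)) / 2

open Topology

@[fun_prop]
theorem Real.continuous_tanh : Continuous Real.tanh := by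
  simp only [funext Real.tanh_eq_sinh_div_cosh]
  exact Real.continuous_sinh.div Real.continuous_cosh fun x => (Real.cosh_pos x).ne'

theorem one_add_mul_tanh_pos {s : ℝ} (hs : |s| ≤ 1) (x : ℝ) : 0 < 1 + s * Real.tanh x := by
  have : |s * Real.tanh x| < 1 := by
    rw [abs_mul]
    exact (mul_le_of_le_one_left (abs_nonneg _) hs).trans_lt (Real.abs_tanh_lt_one x)
  linarith [neg_abs_le (s * Real.tanh x)]

theorem continuous_log_one_add_mul_tanh_half {s : ℝ} (hs : |s| ≤ 1) :
    Continuous fun x => Real.log ((1 + s * Real.tanh (x / 2)) / 2) :=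
  Continuous.log (by fun_prop) fun x => (half_pos (one_add_mul_tanh_pos hs (x / 2))).ne'

namespace GWSetup

variable {Ω : Type*} [MeasurableSpace Ω] {P : Measure Ω} {d : ℝ} (G : GWSetup Ω P d)

theorem abs_sgn' (v : List ℕ) (ω : Ω) : |G.sgn' v ω| = 1 := by
  unfold sgn'
  split_ifs <;> simp

noncomputable def recursionStep (v : List ℕ) (ω : Ω) (x : ℕ → ℝ) : ℝ :=
  -∑ i ∈ Finset.range (G.deg v ω),
    G.sgn (v ++ [i]) ω * Real.log ((1 + G.sgn' (v ++ [i]) ω * Real.tanh (x i / 2)) / 2)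

theorem theta_succ (ℓ : ℕ) (v : List ℕ) (ω : Ω) :
    G.theta (ℓ + 1) v ω = G.recursionStep v ω fun i => G.theta ℓ (v ++ [i]) ω :=
  rfl

theorem continuous_recursionStep (v : List ℕ) (ω : Ω) : Continuous (G.recursionStep v ω) :=
  continuous_finsetSum _ (fun i _ => continuous_const.mul
    ((continuous_log_one_add_mul_tanh_half (G.abs_sgn' _ ω).le).comp (continuous_apply i))) |>.neg

theorem eq_recursionStep_of_tendsto_theta {v : List ℕ} {ω : Ω} {y : ℝ} {x : ℕ → ℝ}
    (hv : Tendsto (fun ℓ => G.theta ℓ v ω) atTop (𝓝 y))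
    (hchild : ∀ i, Tendsto (fun ℓ => G.theta ℓ (v ++ [i]) ω) atTop (𝓝 (x i))) :
    y = G.recursionStep v ω x := by
  have hstep : Tendsto (fun ℓ => G.theta (ℓ + 1) v ω) atTop (𝓝 (G.recursionStep v ω x)) := by
    simp only [theta_succ]
    exact (G.continuous_recursionStep v ω).continuousAt.tendsto.comp (tendsto_pi_nhds.2 hchild)
  exact tendsto_nhds_unique (hv.comp (tendsto_add_atTop_nat 1)) hstep

end GWSetup

theorem theta_limit_recursion_general {Ω : Type*} [MeasurableSpace Ω] {P : Measure Ω}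
    {d : ℝ} (G : GWSetup Ω P d)
    (θlim : List ℕ → Ω → ℝ)
    (hconv : ∀ v : List ℕ, ∀ᵐ ω ∂P,
      Tendsto (fun ℓ : ℕ => G.theta ℓ v ω) atTop (nhds (θlim v ω))) :
    ∀ᵐ ω ∂P, θlim ([] : List ℕ) ω =
      ∑ i ∈ Finset.range (G.deg ([] : List ℕ) ω),
        (-(G.sgn ([i]) ω)) *
          Real.log ((1 + G.sgn' ([i]) ω * Real.tanh (θlim ([i]) ω / 2)) / 2) := by
  filter_upwards [hconv [], ae_all_iff.2 fun i => hconv [i]] with ω hroot hchild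
  rw [G.eq_recursionStep_of_tendsto_theta hroot hchild, GWSetup.recursionStep,
    ← Finset.sum_neg_distrib]
  simp only [List.nil_append, neg_mul]

/-- **The almost sure recursion for the limit:** if, for every vertex `v`, `θ_v` is an
integrable almost sure (and `L¹`) limit of the recursion `(θ_v^{(ℓ)})_ℓ`, then almost surely
`θ_o = ∑_{i=1}^{d_∅} (-s_{(i)}) log((1 + s'_{(i)} tanh(θ_{(i)}/2))/2)`. -/
theorem theta_limit_recursion {Ω : Type*} [MeasurableSpace Ω] {P : Measure Ω}
    [IsProbabilityMeasure P] {d : ℝ} (hd : d ∈ Set.Ioo (0 : ℝ) 2) (G : GWSetup Ω P d)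
    (θlim : List ℕ → Ω → ℝ)
    (hmeas : ∀ v : List ℕ, Measurable (θlim v))
    (hint : ∀ v : List ℕ, Integrable (θlim v) P)
    (hconv : ∀ v : List ℕ, ∀ᵐ ω ∂P,
      Tendsto (fun ℓ : ℕ => G.theta ℓ v ω) atTop (nhds (θlim v ω)))
    (hL1 : ∀ v : List ℕ,
      Tendsto (fun ℓ : ℕ => ∫ ω, |G.theta ℓ v ω - θlim v ω| ∂P) atTop (nhds 0)) :
    ∀ᵐ ω ∂P, θlim ([] : List ℕ) ω =
      ∑ i ∈ Finset.range (G.deg ([] : List ℕ) ω),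
        (-(G.sgn ([i]) ω)) *
          Real.log ((1 + G.sgn' ([i]) ω * Real.tanh (θlim ([i]) ω / 2)) / 2) :=
  theta_limit_recursion_general G θlim hconv
end

section
/- Almost surely on the event {|T| < ∞} that the Galton–Watson tree T is finite, the random variable Μ_o := ψ(θ_o) is a rational number in (0,1); that is, P({Μ_o ∈ ℚ ∩ (0,1)} ∩ {|T| < ∞}) = P(|T| < ∞). -/
open MeasureTheory ProbabilityTheory Filter

/-! Every iterate `θ_∅^{(ℓ)}` lies in the additive group of logarithms of
positive rationals, since `ψ` maps `log q` to `q / (1 + q)` and the recursion is a signed sum of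
`log ψ(±θ)`. On a finite tree of height `h` the recursion stabilises from `ℓ = h` on, so the
almost sure limit `θ_o` is one of the iterates, and `ψ(θ_o) = q / (1 + q)` is rational in
`(0, 1)`. -/

def logPosRat : AddSubgroup ℝ where
  carrier := {x | ∃ q : ℚ, 0 < q ∧ Real.exp x = q}
  zero_mem' := ⟨1, one_pos, by simp⟩
  add_mem' := by
    rintro x y ⟨p, hp, hx⟩ ⟨q, hq, hy⟩
    exact ⟨p * q, mul_pos hp hq, by rw [Real.exp_add, hx, hy, Rat.cast_mul]⟩
  neg_mem' := by
    rintro x ⟨q, hq, hx⟩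
    exact ⟨q⁻¹, inv_pos.2 hq, by rw [Real.exp_neg, hx, Rat.cast_inv]⟩

lemma AddSubgroup.mul_mem_of_sign {S : AddSubgroup ℝ} {s x : ℝ} (hs : s = 1 ∨ s = -1)
    (hx : x ∈ S) : s * x ∈ S := by
  rcases hs with rfl | rfl
  · simpa using hx
  · simpa using S.neg_mem hx

lemma psi_eq_exp_div (θ : ℝ) : psi θ = Real.exp θ / (1 + Real.exp θ) := by
  have hθ : Real.exp θ = Real.exp (θ / 2) * Real.exp (θ / 2) := by
    rw [← Real.exp_add, add_halves]
  have hpos := Real.exp_pos (θ / 2)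
  rw [psi, Real.tanh_eq_sinh_div_cosh, Real.sinh_eq, Real.cosh_eq, Real.exp_neg, hθ]
  field_simp
  ring

lemma one_add_mul_tanh_half_div_two {s : ℝ} (hs : s = 1 ∨ s = -1) (θ : ℝ) :
    (1 + s * Real.tanh (θ / 2)) / 2 = psi (s * θ) := by
  rcases hs with rfl | rfl
  · simp [psi]
  · simp [psi, neg_div, Real.tanh_neg]

lemma psi_of_exp_eq {θ : ℝ} {q : ℚ} (hθ : Real.exp θ = q) : psi θ = ((q / (1 + q) : ℚ) : ℝ) := by
  rw [psi_eq_exp_div, hθ]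
  push_cast
  rfl

lemma psi_mem_Ioo (θ : ℝ) : psi θ ∈ Set.Ioo (0 : ℝ) 1 := by
  have hpos := Real.exp_pos θ
  rw [psi_eq_exp_div]
  exact ⟨by positivity, (div_lt_one (by positivity)).2 (lt_one_add _)⟩

lemma log_psi_mem_logPosRat {θ : ℝ} (hθ : θ ∈ logPosRat) : Real.log (psi θ) ∈ logPosRat := by
  obtain ⟨q, hq, hexp⟩ := hθ
  refine ⟨q / (1 + q), by positivity, ?_⟩
  rw [Real.exp_log (psi_mem_Ioo θ).1, psi_of_exp_eq hexp]

namespace GWSetup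

variable {Ω : Type*} [MeasurableSpace Ω] {P : Measure Ω} {d : ℝ}

lemma sgn_eq_one_or_neg_one (G : GWSetup Ω P d) (v : List ℕ) (ω : Ω) :
    G.sgn v ω = 1 ∨ G.sgn v ω = -1 := by
  unfold sgn
  split_ifs <;> simp

lemma sgn'_eq_one_or_neg_one (G : GWSetup Ω P d) (v : List ℕ) (ω : Ω) :
    G.sgn' v ω = 1 ∨ G.sgn' v ω = -1 := by
  unfold sgn'
  split_ifs <;> simp

lemma theta_mem_logPosRat (G : GWSetup Ω P d) (ℓ : ℕ) (v : List ℕ) (ω : Ω) :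
    G.theta ℓ v ω ∈ logPosRat := by
  induction ℓ generalizing v with
  | zero => exact logPosRat.zero_mem
  | succ ℓ ih =>
    refine logPosRat.neg_mem (logPosRat.sum_mem fun i _ => ?_)
    refine AddSubgroup.mul_mem_of_sign (G.sgn_eq_one_or_neg_one _ ω) ?_
    rw [one_add_mul_tanh_half_div_two (G.sgn'_eq_one_or_neg_one _ ω)]
    exact log_psi_mem_logPosRat
      (AddSubgroup.mul_mem_of_sign (G.sgn'_eq_one_or_neg_one _ ω) (ih _))

/-- The vertices of `T(ω)` below `v`, written relative to `v`. -/
def subtree (G : GWSetup Ω P d) (ω : Ω) (v : List ℕ) : Set (List ℕ) :=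
  {w | ∀ j : Fin w.length, w.get j < G.deg (v ++ w.take (j : ℕ)) ω}

lemma subtree_nil (G : GWSetup Ω P d) (ω : Ω) :
    G.subtree ω [] = {v | G.inTree ω v} := by
  simp [subtree, inTree]

lemma nil_mem_subtree (G : GWSetup Ω P d) (ω : Ω) (v : List ℕ) : [] ∈ G.subtree ω v :=
  fun j => j.elim0

lemma cons_mem_subtree {G : GWSetup Ω P d} {ω : Ω} {v w : List ℕ} {i : ℕ}
    (hi : i < G.deg v ω) (hw : w ∈ G.subtree ω (v ++ [i])) : i :: w ∈ G.subtree ω v := by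
  rintro ⟨_ | j, hj⟩
  · simpa using hi
  · simpa [List.take_succ_cons] using hw ⟨j, Nat.lt_of_succ_lt_succ hj⟩

lemma theta_eq_of_length_lt (G : GWSetup Ω P d) (ω : Ω) {h : ℕ} :
    ∀ {v : List ℕ}, (∀ w ∈ G.subtree ω v, w.length < h) →
      ∀ {ℓ}, h ≤ ℓ → G.theta ℓ v ω = G.theta h v ω := by
  induction h with
  | zero => exact fun hv => absurd (hv [] (G.nil_mem_subtree ω _)) (Nat.lt_irrefl 0)
  | succ h ih =>
    intro v hv ℓ hℓ
    obtain ⟨k, rfl⟩ : ∃ k, ℓ = k + 1 := ⟨ℓ - 1, by omega⟩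
    have hchild : ∀ i < G.deg v ω, ∀ w ∈ G.subtree ω (v ++ [i]), w.length < h :=
      fun i hi w hw => Nat.lt_of_succ_lt_succ (hv _ (cons_mem_subtree hi hw))
    simp only [theta]
    congr 1
    refine Finset.sum_congr rfl fun i hi => ?_
    rw [ih (hchild i (Finset.mem_range.1 hi)) (by omega)]

lemma theta_nil_eventually_eq_of_mem_finEvent (G : GWSetup Ω P d) {ω : Ω}
    (hω : ω ∈ G.finEvent) : ∃ h, ∀ᶠ ℓ in atTop, G.theta ℓ [] ω = G.theta h [] ω := by
  have hfin : (G.subtree ω []).Finite := by rwa [subtree_nil]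
  obtain ⟨h, hh⟩ := (hfin.image List.length).bddAbove
  exact ⟨h + 1, eventually_atTop.2 ⟨h + 1, fun ℓ hℓ =>
    G.theta_eq_of_length_lt ω (fun w hw => Nat.lt_succ_of_le (hh ⟨w, hw, rfl⟩)) hℓ⟩⟩

end GWSetup

theorem mu_rational_on_finite_tree_general {Ω : Type*} [MeasurableSpace Ω] {P : Measure Ω}
    {d : ℝ} (G : GWSetup Ω P d)
    (θo : Ω → ℝ)
    (hconv : ∀ᵐ ω ∂P, Tendsto (fun ℓ : ℕ => G.theta ℓ ([] : List ℕ) ω) atTop (nhds (θo ω))) :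
    P ({ω | (∃ q : ℚ, psi (θo ω) = (q : ℝ)) ∧ psi (θo ω) ∈ Set.Ioo (0 : ℝ) 1} ∩ G.finEvent) =
      P G.finEvent := by
  refine le_antisymm (measure_mono Set.inter_subset_right) (measure_mono_ae ?_)
  filter_upwards [hconv] with ω hlim hfin
  obtain ⟨h, hconst⟩ := G.theta_nil_eventually_eq_of_mem_finEvent hfin
  have hθo : θo ω = G.theta h [] ω :=
    tendsto_nhds_unique hlim (tendsto_const_nhds.congr' (hconst.mono fun _ => Eq.symm))
  obtain ⟨q, -, hexp⟩ := G.theta_mem_logPosRat h [] ω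
  rw [← hθo] at hexp
  exact ⟨⟨⟨_, psi_of_exp_eq hexp⟩, psi_mem_Ioo _⟩, hfin⟩

/-- **On the event that the Galton–Watson tree is finite, `Μ_o = ψ(θ_o)` is almost surely a
rational number in `(0,1)`:** `P({Μ_o ∈ ℚ ∩ (0,1)} ∩ {|T| < ∞}) = P(|T| < ∞)`. -/
theorem mu_rational_on_finite_tree {Ω : Type*} [MeasurableSpace Ω] {P : Measure Ω}
    [IsProbabilityMeasure P] {d : ℝ} (hd : d ∈ Set.Ioo (0 : ℝ) 2) (G : GWSetup Ω P d)
    (θo : Ω → ℝ) (hmeas : Measurable θo) (hint : Integrable θo P)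
    (hconv : ∀ᵐ ω ∂P, Tendsto (fun ℓ : ℕ => G.theta ℓ ([] : List ℕ) ω) atTop (nhds (θo ω)))
    (hL1 : Tendsto (fun ℓ : ℕ => ∫ ω, |G.theta ℓ ([] : List ℕ) ω - θo ω| ∂P) atTop (nhds 0)) :
    P ({ω | (∃ q : ℚ, psi (θo ω) = (q : ℝ)) ∧ psi (θo ω) ∈ Set.Ioo (0 : ℝ) 1} ∩ G.finEvent) =
      P G.finEvent :=
  mu_rational_on_finite_tree_general G θo hconv
end

section
/- Let d ∈ (0,2) and let π_d denote the distribution of Μ_o := ψ(θ_o). Then every rational number q ∈ (0,1) is an atom of π_d: π_d({q}) > 0 for all q ∈ ℚ ∩ (0,1). -/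
open MeasureTheory ProbabilityTheory Filter

/-! With positive probability the Galton–Watson tree is a path of length `h` along which
`s' = -1` and `s` follows any prescribed pattern. On that event the recursion stabilises after
`h` steps, and, since `ψ θ = e^θ / (e^θ + 1)`, each level acts on `e^θ` by `x ↦ x + 1` (if
`s = +1`) or by `x ↦ 1 / (x + 1)` (if `s = -1`), starting from `e^0 = 1`. Running the subtractive
Euclidean algorithm backwards, these two maps reach every positive rational, in particular
`q / (1 - q)`, and then `Μ_o = ψ (log (q / (1 - q))) = q`. -/

open Real in
theorem Real.tanh_half_eq (x : ℝ) : tanh (x / 2) = (exp x - 1) / (exp x + 1) := by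
  have hsq : exp x = exp (x / 2) * exp (x / 2) := by rw [← exp_add, add_halves]
  rw [tanh_eq, exp_neg, hsq]
  have : exp (x / 2) ≠ 0 := (exp_pos _).ne'
  field_simp

theorem psi_eq (x : ℝ) : psi x = Real.exp x / (Real.exp x + 1) := by
  have : Real.exp x + 1 ≠ 0 := by positivity
  rw [psi, Real.tanh_half_eq]
  field_simp
  ring

theorem continuous_psi : Continuous psi := by
  simp only [funext psi_eq]
  exact Real.continuous_exp.div (by fun_prop) fun x => by positivity

theorem one_sub_tanh_half_div_two (x : ℝ) :
    (1 + (-1) * Real.tanh (x / 2)) / 2 = (Real.exp x + 1)⁻¹ := by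
  have : Real.exp x + 1 ≠ 0 := by positivity
  rw [Real.tanh_half_eq]
  field_simp
  ring

noncomputable def signOf (b : Bool) : ℝ := if b then 1 else -1

/-- The recursion at a vertex whose only child carries the signs `s = signOf b`, `s' = -1`
and the value `θ`. -/
noncomputable def pathStep (b : Bool) (θ : ℝ) : ℝ :=
  -(signOf b * Real.log ((1 + (-1) * Real.tanh (θ / 2)) / 2))

noncomputable def pathVal (L : List Bool) : ℝ := L.foldr pathStep 0

theorem exp_pathStep_true (θ : ℝ) : Real.exp (pathStep true θ) = Real.exp θ + 1 := by
  rw [pathStep, one_sub_tanh_half_div_two, Real.log_inv, signOf, if_pos rfl, one_mul, neg_neg,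
    Real.exp_log (by positivity)]

theorem exp_pathStep_false (θ : ℝ) : Real.exp (pathStep false θ) = (Real.exp θ + 1)⁻¹ := by
  rw [pathStep, one_sub_tanh_half_div_two, signOf, if_neg Bool.false_ne_true, neg_one_mul,
    neg_neg, Real.exp_log (by positivity)]

theorem exists_exp_pathVal_eq_div (a c : ℕ) (ha : 0 < a) (hc : 0 < c) :
    ∃ L, Real.exp (pathVal L) = a / c := by
  induction hn : a + c using Nat.strong_induction_on generalizing a c with
  | _ n ih =>
    subst hn
    have ha' : (a : ℝ) ≠ 0 := by positivity
    have hc' : (c : ℝ) ≠ 0 := by positivity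
    rcases lt_trichotomy a c with hac | rfl | hca
    · obtain ⟨L, hL⟩ := ih (c - a + a) (by omega) (c - a) a (by omega) ha rfl
      refine ⟨false :: L, ?_⟩
      rw [pathVal, List.foldr_cons, exp_pathStep_false, ← pathVal, hL, Nat.cast_sub hac.le,
        div_add_one ha', sub_add_cancel, inv_div]
    · exact ⟨[], by simp [pathVal, ha']⟩
    · obtain ⟨L, hL⟩ := ih (a - c + c) (by omega) (a - c) c (by omega) hc rfl
      refine ⟨true :: L, ?_⟩
      rw [pathVal, List.foldr_cons, exp_pathStep_true, ← pathVal, hL, Nat.cast_sub hca.le,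
        div_add_one hc', sub_add_cancel]

theorem exists_exp_pathVal_eq (r : ℚ) (hr : 0 < r) : ∃ L, Real.exp (pathVal L) = r := by
  obtain ⟨L, hL⟩ :=
    exists_exp_pathVal_eq_div r.num.toNat r.den (by simpa using Rat.num_pos.mpr hr) r.den_pos
  refine ⟨L, hL.trans ?_⟩
  rw [Rat.cast_def, ← Int.cast_natCast, Int.toNat_of_nonneg (Rat.num_nonneg.mpr hr.le)]

theorem exists_psi_pathVal_eq (q : ℚ) (hq : (q : ℝ) ∈ Set.Ioo 0 1) :
    ∃ L, psi (pathVal L) = q := by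
  have hq0 : 0 < q := by exact_mod_cast hq.1
  have hq1 : q < 1 := by exact_mod_cast hq.2
  obtain ⟨L, hL⟩ := exists_exp_pathVal_eq (q / (1 - q)) (div_pos hq0 (sub_pos.mpr hq1))
  refine ⟨L, ?_⟩
  have : (1 : ℝ) - q ≠ 0 := (sub_pos.mpr hq.2).ne'
  rw [psi_eq, hL]
  push_cast
  field_simp
  ring

theorem ProbabilityTheory.iIndepFun.measure_biInter_preimage_pos {Ω ι : Type*}
    [MeasurableSpace Ω] {P : Measure Ω} {β : ι → Type*} [∀ i, MeasurableSpace (β i)]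
    {Z : ∀ i, Ω → β i} (hZ : iIndepFun Z P) (S : Finset ι) {A : ∀ i, Set (β i)}
    (hA : ∀ i ∈ S, MeasurableSet (A i)) (hpos : ∀ i ∈ S, 0 < P (Z i ⁻¹' A i)) :
    0 < P (⋂ i ∈ S, Z i ⁻¹' A i) := by
  rw [hZ.measure_inter_preimage_eq_mul S hA]
  exact CanonicallyOrderedAdd.prod_pos.mpr hpos

/-- The values of `Z` on the event that the tree is the path `[] → [0] → [0, 0] → ⋯` of
length `L.length`, with `s' = -1` along it and `s = signOf L[m]` at depth `m + 1`. -/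
def pathTarget (L : List Bool) (p : List ℕ × Fin 3) : ℕ :=
  if p.2 = 0 then (if p.1.length < L.length then 1 else 0)
  else if p.2 = 1 then (L.getD (p.1.length - 1) false).toNat
  else 0

theorem pathTarget_le_one (L : List Bool) (p : List ℕ × Fin 3) : pathTarget L p ≤ 1 := by
  unfold pathTarget
  split_ifs <;> simp [Bool.toNat_le]

def pathCoords (L : List Bool) : Finset (List ℕ × Fin 3) :=
  (Finset.range (L.length + 1)).image (List.replicate · 0) ×ˢ Finset.univ

namespace GWSetup

variable {Ω : Type*} [MeasurableSpace Ω] {P : Measure Ω} {d : ℝ} (G : GWSetup Ω P d)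

theorem measure_Z_eq_pos (hd : 0 < d) (p : List ℕ × Fin 3) {k : ℕ} (hk : p.2 = 0 ∨ k ≤ 1) :
    0 < P (G.Z p ⁻¹' {k}) := by
  obtain ⟨v, i⟩ := p
  fin_cases i
  · exact (G.poisson v k).symm ▸ ENNReal.ofReal_pos.mpr (by positivity)
  all_goals
    obtain rfl | rfl : k = 0 ∨ k = 1 := by have := hk.resolve_left (by simp); omega
  · simp [Set.preimage, (G.unif_s v).1]
  · simp [Set.preimage, (G.unif_s v).2]
  · simp [Set.preimage, (G.unif_s' v).1]
  · simp [Set.preimage, (G.unif_s' v).2]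

def pathEvent (L : List Bool) : Set Ω := ⋂ p ∈ pathCoords L, G.Z p ⁻¹' {pathTarget L p}

theorem measure_pathEvent_pos (hd : 0 < d) (L : List Bool) : 0 < P (G.pathEvent L) :=
  G.indep.measure_biInter_preimage_pos _ (fun _ _ => measurableSet_singleton _)
    fun p _ => G.measure_Z_eq_pos hd p (Or.inr (pathTarget_le_one L p))

variable {G}

theorem Z_eq_pathTarget {L : List Bool} {ω : Ω} (hω : ω ∈ G.pathEvent L) {m : ℕ}
    (hm : m ≤ L.length) (i : Fin 3) :
    G.Z (List.replicate m 0, i) ω = pathTarget L (List.replicate m 0, i) :=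
  Set.mem_iInter₂.mp hω _ (Finset.mem_product.mpr
    ⟨Finset.mem_image_of_mem _ (Finset.mem_range.mpr (Nat.lt_succ_of_le hm)), Finset.mem_univ _⟩)

theorem theta_replicate_of_mem_pathEvent {L : List Bool} {ω : Ω} (hω : ω ∈ G.pathEvent L)
    {ℓ k : ℕ} (hk : k ≤ L.length) (hℓ : L.length ≤ ℓ + k) :
    G.theta ℓ (List.replicate k 0) ω = pathVal (L.drop k) := by
  induction ℓ generalizing k with
  | zero =>
    obtain rfl : k = L.length := by omega
    simp [theta, pathVal]
  | succ ℓ ih =>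
    rcases hk.eq_or_lt with rfl | hlt
    · have hdeg := Z_eq_pathTarget hω le_rfl 0
      simp [theta, deg, hdeg, pathTarget, pathVal]
    · have hdeg : G.deg (List.replicate k 0) ω = 1 := by
        simpa [deg, pathTarget, hlt] using Z_eq_pathTarget hω hk 0
      have hdrop : pathVal (L.drop k) = pathStep L[k] (pathVal (L.drop (k + 1))) := by
        rw [List.drop_eq_getElem_cons hlt, pathVal, List.foldr_cons, pathVal]
      have hs := Z_eq_pathTarget hω hlt 1
      have hs' := Z_eq_pathTarget hω hlt 2
      rw [theta, hdeg, Finset.sum_range_one, ← List.replicate_succ', ih hlt (by omega),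
        hdrop]
      simp [sgn, sgn', hs, hs', pathTarget, pathStep, signOf, hlt]

theorem theta_nil_of_mem_pathEvent {L : List Bool} {ω : Ω} (hω : ω ∈ G.pathEvent L) {ℓ : ℕ}
    (hℓ : L.length ≤ ℓ) : G.theta ℓ [] ω = pathVal L := by
  simpa using theta_replicate_of_mem_pathEvent hω (Nat.zero_le _) (by omega : L.length ≤ ℓ + 0)

end GWSetup

theorem rationals_are_atoms_general {Ω : Type*} [MeasurableSpace Ω] {P : Measure Ω}
    {d : ℝ} (hd : d ∈ Set.Ioo (0 : ℝ) 2) (G : GWSetup Ω P d)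
    (θo : Ω → ℝ) (hmeas : Measurable θo)
    (hconv : ∀ᵐ ω ∂P, Tendsto (fun ℓ : ℕ => G.theta ℓ ([] : List ℕ) ω) atTop (nhds (θo ω))) :
    ∀ q : ℚ, (q : ℝ) ∈ Set.Ioo (0 : ℝ) 1 →
      0 < (P.map fun ω => psi (θo ω)) {(q : ℝ)} := by
  intro q hq
  obtain ⟨L, hL⟩ := exists_psi_pathVal_eq q hq
  have hsub : ∀ᵐ ω ∂P, ω ∈ G.pathEvent L → psi (θo ω) = q := by
    filter_upwards [hconv] with ω hω hωL
    rw [← hL, tendsto_nhds_unique hω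
      (tendsto_atTop_of_eventually_const fun _ => GWSetup.theta_nil_of_mem_pathEvent hωL)]
  have hψ : Measurable fun ω => psi (θo ω) := continuous_psi.measurable.comp hmeas
  rw [Measure.map_apply hψ (measurableSet_singleton _)]
  exact (G.measure_pathEvent_pos hd.1 L).trans_le (measure_mono_ae hsub)

/-- **Every rational in `(0,1)` is an atom of `π_d`,** the law of `Μ_o = ψ(θ_o)`:
for every `q ∈ ℚ ∩ (0,1)`, `π_d({q}) > 0`. -/
theorem rationals_are_atoms {Ω : Type*} [MeasurableSpace Ω] {P : Measure Ω}
    [IsProbabilityMeasure P] {d : ℝ} (hd : d ∈ Set.Ioo (0 : ℝ) 2) (G : GWSetup Ω P d)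
    (θo : Ω → ℝ) (hmeas : Measurable θo) (hint : Integrable θo P)
    (hconv : ∀ᵐ ω ∂P, Tendsto (fun ℓ : ℕ => G.theta ℓ ([] : List ℕ) ω) atTop (nhds (θo ω)))
    (hL1 : Tendsto (fun ℓ : ℕ => ∫ ω, |G.theta ℓ ([] : List ℕ) ω - θo ω| ∂P) atTop (nhds 0)) :
    ∀ q : ℚ, (q : ℝ) ∈ Set.Ioo (0 : ℝ) 1 →
      0 < (P.map fun ω => psi (θo ω)) {(q : ℝ)} :=
  rationals_are_atoms_general hd G θo hmeas hconv
end
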